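/- arXiv:1607.05980 — 2 statements merged into one kernel-verified Lean document; each statement's English description precedes it below -/
import Mathlib

section
/- Let D be a directed acyclic graph on vertex set {1,...,p} and let i → j be a covered edge of D, meaning pa_D(i) = pa_D(j) \ {i}. Then the directed graph D' obtained from D by replacing the edge i → j with j → i is again acyclic. -/
/-!
Let `R` be `D` with the edge `i → j` removed, so that `D' = R ∪ {j → i}`. A cycle of `D'`
either avoids `j → i`, and is then a cycle of `D`, or it yields an `R`-path from `i` to `j`.
The latter is impossible: its last edge `c → j` has `c ≠ i`, so `c → i` is an edge of `D` because
`i → j` is covered, closing the cycle `i ⇝ c → i` in `D`.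
-/

namespace Relation

variable {α : Type*} {r : α → α → Prop}

theorem TransGen.add_edge_cases {u v a b : α}
    (h : TransGen (fun x y => r x y ∨ (x = u ∧ y = v)) a b) :
    TransGen r a b ∨ (ReflTransGen r a u ∧ ReflTransGen r v b) := by
  induction h with
  | single hab =>
    rcases hab with hab | ⟨rfl, rfl⟩
    · exact .inl (.single hab)
    · exact .inr ⟨.refl, .refl⟩
  | tail _ hcd ih =>
    rcases hcd with hcd | ⟨rfl, rfl⟩
    · rcases ih with ih | ⟨hau, hvc⟩
      · exact .inl (ih.tail hcd)
      · exact .inr ⟨hau, hvc.tail hcd⟩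
    · rcases ih with ih | ⟨hau, -⟩
      · exact .inr ⟨ih.to_reflTransGen, .refl⟩
      · exact .inr ⟨hau, .refl⟩

theorem not_transGen_add_edge_self {u v : α} (hacyc : ∀ a, ¬TransGen r a a)
    (hvu : ¬ReflTransGen r v u) (a : α) :
    ¬TransGen (fun x y => r x y ∨ (x = u ∧ y = v)) a a := by
  intro h
  rcases h.add_edge_cases with h | ⟨hau, hva⟩
  · exact hacyc a h
  · exact hvu (hva.trans hau)

theorem not_reflTransGen_remove_covered_edge {i j : α} (hacyc : ∀ a, ¬TransGen r a a)
    (hij : i ≠ j) (hcov : ∀ m, r m j → m ≠ i → r m i) :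
    ¬ReflTransGen (fun a b => r a b ∧ ¬(a = i ∧ b = j)) i j := by
  intro h
  rcases reflTransGen_iff_eq_or_transGen.mp h with rfl | h
  · exact hij rfl
  cases h with
  | single hij' => exact hij'.2 ⟨rfl, rfl⟩
  | tail hic hcj =>
    have hci := hcov _ hcj.1 fun hc => hcj.2 ⟨hc, rfl⟩
    exact hacyc i ((TransGen.mono (fun _ _ h => h.1) _ _ hic).tail hci)

end Relation

open Relation in
theorem covered_edge_reversal_acyclic_general
    (p : ℕ) (E : Fin p → Fin p → Prop)
    (hacyc : ∀ a : Fin p, ¬ Relation.TransGen E a a)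
    (i j : Fin p) (hij : i ≠ j)
    (hcov : ∀ m : Fin p, E m i ↔ (E m j ∧ m ≠ i))
    (E' : Fin p → Fin p → Prop)
    (hE' : ∀ a b : Fin p,
      E' a b ↔ ((E a b ∧ ¬(a = i ∧ b = j)) ∨ (a = j ∧ b = i))) :
    ∀ a : Fin p, ¬ Relation.TransGen E' a a := by
  obtain rfl : E' = fun a b => (E a b ∧ ¬(a = i ∧ b = j)) ∨ (a = j ∧ b = i) :=
    funext₂ fun a b => propext (hE' a b)
  refine not_transGen_add_edge_self (fun a h => hacyc a (TransGen.mono (fun _ _ h => h.1) _ _ h)) ?_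
  exact not_reflTransGen_remove_covered_edge hacyc hij fun m hm hmi => (hcov m).mpr ⟨hm, hmi⟩

/-- Reversing a covered edge `i → j` of a DAG yields an acyclic directed graph.
The edge relation of `D'` agrees with that of `D` except that `i → j` is
replaced by `j → i`. -/
theorem covered_edge_reversal_acyclic
    (p : ℕ) (E : Fin p → Fin p → Prop)
    (hacyc : ∀ a : Fin p, ¬ Relation.TransGen E a a)
    (i j : Fin p) (hij : i ≠ j) (hedge : E i j)
    (hcov : ∀ m : Fin p, E m i ↔ (E m j ∧ m ≠ i))
    (E' : Fin p → Fin p → Prop)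
    (hE' : ∀ a b : Fin p,
      E' a b ↔ ((E a b ∧ ¬(a = i ∧ b = j)) ∨ (a = j ∧ b = i))) :
    ∀ a : Fin p, ¬ Relation.TransGen E' a a :=
  covered_edge_reversal_acyclic_general p E hacyc i j hij hcov E' hE'
end

section
/- Let D be a directed acyclic graph and let i → j be a covered edge of D (pa_D(i) = pa_D(j) \ {i}). Let D' be obtained from D by reversing this edge. Then D and D' have the same skeleton and the same v-structures, where a v-structure is a triple (a,b,c) of vertices with a → c and b → c edges and a, b non-adjacent. -/
/-- Reversing a covered edge `i → j` of a DAG preserves the skeleton and the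
v-structures: a v-structure is a triple `(a,b,c)` with `a → c`, `b → c`, and
`a`, `b` non-adjacent. -/
theorem covered_edge_reversal_skeleton_vstructures
    (p : ℕ) (E : Fin p → Fin p → Prop)
    (hacyc : ∀ a : Fin p, ¬ Relation.TransGen E a a)
    (i j : Fin p) (hij : i ≠ j) (hedge : E i j)
    (hcov : ∀ m : Fin p, E m i ↔ (E m j ∧ m ≠ i))
    (E' : Fin p → Fin p → Prop)
    (hE' : ∀ a b : Fin p,
      E' a b ↔ ((E a b ∧ ¬(a = i ∧ b = j)) ∨ (a = j ∧ b = i))) :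
    (∀ a b : Fin p, (E a b ∨ E b a) ↔ (E' a b ∨ E' b a)) ∧
    (∀ a b c : Fin p,
      (E a c ∧ E b c ∧ a ≠ b ∧ ¬(E a b ∨ E b a)) ↔
      (E' a c ∧ E' b c ∧ a ≠ b ∧ ¬(E' a b ∨ E' b a))) := by

  have hskel : ∀ a b : Fin p, (E a b ∨ E b a) ↔ (E' a b ∨ E' b a) := by
    intro a b
    rw [hE', hE']
    constructor
    · rintro (h | h)
      · by_cases hc : a = i ∧ b = j
        · exact Or.inr (Or.inr ⟨hc.2, hc.1⟩)
        · exact Or.inl (Or.inl ⟨h, hc⟩)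
      · by_cases hc : b = i ∧ a = j
        · exact Or.inl (Or.inr ⟨hc.2, hc.1⟩)
        · exact Or.inr (Or.inl ⟨h, hc⟩)
    · rintro ((⟨h, -⟩ | ⟨ha, hb⟩) | (⟨h, -⟩ | ⟨hb, ha⟩))
      · exact Or.inl h
      · subst ha; subst hb; exact Or.inr hedge
      · exact Or.inr h
      · subst ha; subst hb; exact Or.inl hedge
  refine ⟨hskel, fun a b c => ?_⟩
  have key : ∀ x y : Fin p, E x c → E y c → x ≠ y → ¬(E x y ∨ E y x) → E' x c := by
    intro x y hx hy hxy hn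
    rw [hE']
    left
    refine ⟨hx, ?_⟩
    rintro ⟨rfl, rfl⟩
    have : E y x := (hcov y).2 ⟨hy, fun h => hxy h.symm⟩
    exact hn (Or.inr this)
  have key' : ∀ x y : Fin p, E' x c → E' y c → x ≠ y → ¬(E x y ∨ E y x) → E x c := by
    intro x y hx hy hxy hn
    rw [hE'] at hx hy
    rcases hx with ⟨h, -⟩ | ⟨hx1, hx2⟩
    · exact h
    · rcases hy with ⟨h, -⟩ | ⟨hy1, -⟩
      · subst hx2
        have := ((hcov y).1 h).1
        exact absurd (Or.inr (hx1 ▸ this)) hn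
      · exact absurd (hx1.trans hy1.symm) hxy
  constructor
  · rintro ⟨hac, hbc, hab, hnadj⟩
    have hnadj' : ¬(E b a ∨ E a b) := fun h => hnadj h.symm
    exact ⟨key a b hac hbc hab hnadj, key b a hbc hac hab.symm hnadj',
      hab, fun h => hnadj ((hskel a b).mpr h)⟩
  · rintro ⟨hac, hbc, hab, hnadj'⟩
    have hnadj : ¬(E a b ∨ E b a) := fun h => hnadj' ((hskel a b).mp h)
    have hnadj2 : ¬(E b a ∨ E a b) := fun h => hnadj h.symm
    exact ⟨key' a b hac hbc hab hnadj, key' b a hbc hac hab.symm hnadj2, hab, hnadj⟩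
end
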